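/- arXiv:2403.00886 — 6 statements merged into one kernel-verified Lean document; each statement's English description precedes it below -/
import Mathlib

section
/- Cross-domain identification of the conditional expectation (Proposition 4, sufficiency / Corollary 5 T3, equations (6) and (8)): Assume μ and ν admit a common disintegration kernel κ of the outcome given (X,Z), assume the outcome coordinate Y is integrable under both μ and ν, and assume ν_{XZ} ≪ μ_{XZ} (absolute continuity of the target (X,Z)-marginal with respect to the source (X,Z)-marginal). Then for every measurable g : 𝒳 × 𝒵 → ℝ that is a version of the conditional expectation of Y given the (X,Z)-coordinates under μ (a source-domain regression function), the function (x,z,y) ↦ g(x,z) is also a version of the conditional expectation of Y given the (X,Z)-coordinates under ν, and moreover the conditional expectation of Y given the X-coordinate under ν equals, ν-almost everywhere, the conditional expectation of g(X,Z) given the X-coordinate under ν. In particular the target-domain regression function E_ν[Y | X] is obtained by the repeated regression E_ν[E_μ[Y | X, Z] | X]. -/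
/-!
Under any law `ρ` of `(X, Z, Y)` disintegrated by `κ`, the conditional distribution of `Y`
given `(X, Z)` is `κ`, so `E_ρ[Y | X, Z] = m ∘ (X, Z)` with `m(x, z) = ∫ y dκ(x, z)`,
the same function for `μ` and `ν`. A source regression function `g` agrees with `m`
`μ_{XZ}`-a.e., hence `ν_{XZ}`-a.e. by absolute continuity; the second claim is then the tower
property for `σ(X) ≤ σ(X, Z)`.
-/

open MeasureTheory ProbabilityTheory

theorem ProbabilityTheory.condExp_ae_eq_integral_kernel_of_map_eq_compProd
    {Ω S : Type*} [MeasurableSpace Ω] [MeasurableSpace S]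
    {ρ : Measure Ω} [IsFiniteMeasure ρ] {κ : Kernel S ℝ} [IsFiniteKernel κ]
    {π : Ω → S} {Y : Ω → ℝ} (hπ : Measurable π) (hY : Measurable Y) (hYint : Integrable Y ρ)
    (hρ : ρ.map (fun ω => (π ω, Y ω)) = ρ.map π ⊗ₘ κ) :
    ρ[Y | MeasurableSpace.comap π inferInstance] =ᵐ[ρ] fun ω => ∫ y, y ∂κ (π ω) := by
  have hsnd_int : Integrable (fun p : S × ℝ => p.2) (ρ.map fun ω => (π ω, Y ω)) :=
    (integrable_map_measure measurable_snd.aestronglyMeasurable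
      (hπ.prodMk hY).aemeasurable).mpr hYint
  have hcondDistrib : condDistrib Y π ρ =ᵐ[ρ.map π] κ :=
    condDistrib_ae_eq_of_measure_eq_compProd π hY.aemeasurable hρ
  refine (condExp_prod_ae_eq_integral_condDistrib' hπ hY.aemeasurable hsnd_int).trans ?_
  filter_upwards [ae_of_ae_map hπ.aemeasurable hcondDistrib] with ω hω
  rw [hω]

theorem MeasureTheory.ae_eq_comp_of_map_absolutelyContinuous
    {Ω S E : Type*} [MeasurableSpace Ω] [MeasurableSpace S] [MeasurableSpace E] [MeasurableEq E]
    {μ ν : Measure Ω} {π : Ω → S} (hπ : Measurable π) (hac : ν.map π ≪ μ.map π)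
    {f h : S → E} (hf : Measurable f) (hh : Measurable h)
    (hμ : (fun ω => f (π ω)) =ᵐ[μ] fun ω => h (π ω)) :
    (fun ω => f (π ω)) =ᵐ[ν] fun ω => h (π ω) := by
  have hmap : f =ᵐ[μ.map π] h :=
    (ae_map_iff hπ.aemeasurable (measurableSet_eq_fun hf hh)).mpr hμ
  exact ae_eq_comp hπ.aemeasurable (hac.ae_eq hmap)

section OutcomeGivenFeatures

variable {𝒳 𝒵 : Type*} [MeasurableSpace 𝒳] [MeasurableSpace 𝒵]

theorem measurable_fst_snd_fst : Measurable (fun ω : 𝒳 × 𝒵 × ℝ => (ω.1, ω.2.1)) :=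
  measurable_fst.prodMk (measurable_fst.comp measurable_snd)

theorem condExp_outcome_ae_eq_integral_kernel
    {ρ : Measure (𝒳 × 𝒵 × ℝ)} [IsFiniteMeasure ρ] {κ : Kernel (𝒳 × 𝒵) ℝ} [IsFiniteKernel κ]
    (hρ : ρ = (ρ.map (fun ω => (ω.1, ω.2.1)) ⊗ₘ κ).map MeasurableEquiv.prodAssoc)
    (hY : Integrable (fun ω : 𝒳 × 𝒵 × ℝ => ω.2.2) ρ) :
    ρ[(fun ω : 𝒳 × 𝒵 × ℝ => ω.2.2) |
        MeasurableSpace.comap (fun ω : 𝒳 × 𝒵 × ℝ => (ω.1, ω.2.1)) inferInstance] =ᵐ[ρ]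
      fun ω => ∫ y, y ∂κ (ω.1, ω.2.1) := by
  refine condExp_ae_eq_integral_kernel_of_map_eq_compProd measurable_fst_snd_fst
    (measurable_snd.comp measurable_snd) hY ?_
  change ρ.map MeasurableEquiv.prodAssoc.symm = _
  conv_lhs => rw [hρ]
  exact MeasurableEquiv.map_symm_map _

theorem comap_fst_le_comap_fst_snd_fst :
    MeasurableSpace.comap (fun ω : 𝒳 × 𝒵 × ℝ => ω.1) inferInstance ≤
      MeasurableSpace.comap (fun ω : 𝒳 × 𝒵 × ℝ => (ω.1, ω.2.1)) inferInstance := by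
  rw [show (fun ω : 𝒳 × 𝒵 × ℝ => ω.1) = Prod.fst ∘ fun ω => (ω.1, ω.2.1) from rfl,
    ← MeasurableSpace.comap_comp]
  exact MeasurableSpace.comap_mono measurable_fst.comap_le

end OutcomeGivenFeatures

theorem cross_domain_identification_general
    {𝒳 𝒵 : Type*} [MeasurableSpace 𝒳] [MeasurableSpace 𝒵]
    (μ ν : Measure (𝒳 × 𝒵 × ℝ)) [IsProbabilityMeasure μ] [IsProbabilityMeasure ν]
    (κ : Kernel (𝒳 × 𝒵) ℝ) [IsMarkovKernel κ]
    (hμ : μ = (μ.map (fun ω => (ω.1, ω.2.1)) ⊗ₘ κ).map MeasurableEquiv.prodAssoc)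
    (hν : ν = (ν.map (fun ω => (ω.1, ω.2.1)) ⊗ₘ κ).map MeasurableEquiv.prodAssoc)
    (hYμ : Integrable (fun ω : 𝒳 × 𝒵 × ℝ => ω.2.2) μ)
    (hYν : Integrable (fun ω : 𝒳 × 𝒵 × ℝ => ω.2.2) ν)
    (hac : ν.map (fun ω : 𝒳 × 𝒵 × ℝ => (ω.1, ω.2.1)) ≪
      μ.map (fun ω : 𝒳 × 𝒵 × ℝ => (ω.1, ω.2.1)))
    (g : 𝒳 × 𝒵 → ℝ) (hg : Measurable g)
    (hgμ : (fun ω : 𝒳 × 𝒵 × ℝ => g (ω.1, ω.2.1)) =ᵐ[μ]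
      μ[(fun ω : 𝒳 × 𝒵 × ℝ => ω.2.2) |
        MeasurableSpace.comap (fun ω : 𝒳 × 𝒵 × ℝ => (ω.1, ω.2.1)) inferInstance]) :
    ((fun ω : 𝒳 × 𝒵 × ℝ => g (ω.1, ω.2.1)) =ᵐ[ν]
      ν[(fun ω : 𝒳 × 𝒵 × ℝ => ω.2.2) |
        MeasurableSpace.comap (fun ω : 𝒳 × 𝒵 × ℝ => (ω.1, ω.2.1)) inferInstance]) ∧
    (ν[(fun ω : 𝒳 × 𝒵 × ℝ => ω.2.2) |
        MeasurableSpace.comap (fun ω : 𝒳 × 𝒵 × ℝ => ω.1) inferInstance] =ᵐ[ν]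
      ν[(fun ω : 𝒳 × 𝒵 × ℝ => g (ω.1, ω.2.1)) |
        MeasurableSpace.comap (fun ω : 𝒳 × 𝒵 × ℝ => ω.1) inferInstance]) := by
  have hm_meas : Measurable fun p : 𝒳 × 𝒵 => ∫ y, y ∂κ p :=
    (measurable_snd.stronglyMeasurable (α := (𝒳 × 𝒵) × ℝ)).integral_kernel_prod_right'.measurable
  have hg_ν : (fun ω : 𝒳 × 𝒵 × ℝ => g (ω.1, ω.2.1)) =ᵐ[ν] fun ω => ∫ y, y ∂κ (ω.1, ω.2.1) :=
    ae_eq_comp_of_map_absolutelyContinuous measurable_fst_snd_fst hac hg hm_meas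
      (hgμ.trans (condExp_outcome_ae_eq_integral_kernel hμ hYμ))
  have hg_condExp := hg_ν.trans (condExp_outcome_ae_eq_integral_kernel hν hYν).symm
  refine ⟨hg_condExp, ?_⟩
  exact (condExp_condExp_of_le comap_fst_le_comap_fst_snd_fst
    measurable_fst_snd_fst.comap_le).symm.trans (condExp_congr_ae hg_condExp.symm)

/-- **Cross-domain identification of the conditional expectation**
(Proposition 4, sufficiency / Corollary 5 T3, equations (6) and (8)).

`μ` is the source-domain law and `ν` the target-domain law of `(X, Z, Y)` on
`𝒳 × 𝒵 × ℝ`.  The domain-pivot assumption `Y ⫫ D, Θ | X, Z` is encoded by a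
common Markov kernel `κ` disintegrating both `μ` and `ν` over their
`(X, Z)`-marginals.  Assuming the outcome coordinate is integrable under both
laws and `ν_{XZ} ≪ μ_{XZ}`, every measurable version `g` of the source-domain
regression function `E_μ[Y | X, Z]` is also a version of `E_ν[Y | X, Z]`, and
`E_ν[Y | X] = E_ν[g(X, Z) | X]` holds `ν`-a.e. (repeated regression). -/
theorem cross_domain_identification
    {𝒳 𝒵 : Type*} [MeasurableSpace 𝒳] [StandardBorelSpace 𝒳]
    [MeasurableSpace 𝒵] [StandardBorelSpace 𝒵]
    (μ ν : Measure (𝒳 × 𝒵 × ℝ)) [IsProbabilityMeasure μ] [IsProbabilityMeasure ν]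
    (κ : Kernel (𝒳 × 𝒵) ℝ) [IsMarkovKernel κ]
    (hμ : μ = (μ.map (fun ω => (ω.1, ω.2.1)) ⊗ₘ κ).map MeasurableEquiv.prodAssoc)
    (hν : ν = (ν.map (fun ω => (ω.1, ω.2.1)) ⊗ₘ κ).map MeasurableEquiv.prodAssoc)
    (hYμ : Integrable (fun ω : 𝒳 × 𝒵 × ℝ => ω.2.2) μ)
    (hYν : Integrable (fun ω : 𝒳 × 𝒵 × ℝ => ω.2.2) ν)
    (hac : ν.map (fun ω : 𝒳 × 𝒵 × ℝ => (ω.1, ω.2.1)) ≪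
      μ.map (fun ω : 𝒳 × 𝒵 × ℝ => (ω.1, ω.2.1)))
    (g : 𝒳 × 𝒵 → ℝ) (hg : Measurable g)
    (hgμ : (fun ω : 𝒳 × 𝒵 × ℝ => g (ω.1, ω.2.1)) =ᵐ[μ]
      μ[(fun ω : 𝒳 × 𝒵 × ℝ => ω.2.2) |
        MeasurableSpace.comap (fun ω : 𝒳 × 𝒵 × ℝ => (ω.1, ω.2.1)) inferInstance]) :
    ((fun ω : 𝒳 × 𝒵 × ℝ => g (ω.1, ω.2.1)) =ᵐ[ν]
      ν[(fun ω : 𝒳 × 𝒵 × ℝ => ω.2.2) |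
        MeasurableSpace.comap (fun ω : 𝒳 × 𝒵 × ℝ => (ω.1, ω.2.1)) inferInstance]) ∧
    (ν[(fun ω : 𝒳 × 𝒵 × ℝ => ω.2.2) |
        MeasurableSpace.comap (fun ω : 𝒳 × 𝒵 × ℝ => ω.1) inferInstance] =ᵐ[ν]
      ν[(fun ω : 𝒳 × 𝒵 × ℝ => g (ω.1, ω.2.1)) |
        MeasurableSpace.comap (fun ω : 𝒳 × 𝒵 × ℝ => ω.1) inferInstance]) :=
  cross_domain_identification_general μ ν κ hμ hν hYμ hYν hac g hg hgμ
end

section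
/- Identification of the deployment effect (Corollary 5 T1, equations (4) and (5)): Let μ be the source-domain law and ν the target-domain law of (X, Z, Y), both with integrable outcome coordinate, admitting a common disintegration kernel κ of the outcome given (X,Z). (i) If ν_{XZ} ≪ μ_{XZ}, then for every measurable g : 𝒳 × 𝒵 → ℝ that is a version of the conditional expectation of Y given the (X,Z)-coordinates under μ, one has ∫ Y dν = ∫ g dν_{XZ}; consequently the deployment effect τ := ∫ Y dν − ∫ Y dμ equals ∫ g dν_{XZ} − ∫ Y dμ and is therefore computable from μ together with the target (X,Z)-marginal alone (pre-deployment evaluation, equation (4)). (ii) Symmetrically, if μ_{XZ} ≪ ν_{XZ}, then for every measurable h : 𝒳 × 𝒵 → ℝ that is a version of the conditional expectation of Y given the (X,Z)-coordinates under ν, one has ∫ Y dμ = ∫ h dμ_{XZ}, so τ = ∫ Y dν − ∫ h dμ_{XZ} (post-deployment evaluation, equation (5)). -/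
open MeasureTheory ProbabilityTheory


section Aux
variable {𝒳 𝒵 : Type*} [MeasurableSpace 𝒳] [MeasurableSpace 𝒵]

lemma aux_main (μ : Measure (𝒳 × 𝒵 × ℝ)) [IsProbabilityMeasure μ]
    (κ : Kernel (𝒳 × 𝒵) ℝ) [IsMarkovKernel κ]
    (hμ : μ = (μ.map (fun ω => (ω.1, ω.2.1)) ⊗ₘ κ).map MeasurableEquiv.prodAssoc)
    (hY : Integrable (fun ω : 𝒳 × 𝒵 × ℝ => ω.2.2) μ) :
    (∫ ω, ω.2.2 ∂μ = ∫ q, ∫ y, y ∂κ q ∂(μ.map (fun ω : 𝒳 × 𝒵 × ℝ => (ω.1, ω.2.1)))) ∧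
    Integrable (fun q => ∫ y, y ∂κ q) (μ.map (fun ω : 𝒳 × 𝒵 × ℝ => (ω.1, ω.2.1))) ∧
    ((fun ω : 𝒳 × 𝒵 × ℝ => ∫ y, y ∂κ (ω.1, ω.2.1)) =ᵐ[μ]
      μ[(fun ω : 𝒳 × 𝒵 × ℝ => ω.2.2) |
        MeasurableSpace.comap (fun ω : 𝒳 × 𝒵 × ℝ => (ω.1, ω.2.1)) inferInstance]) := by
  have hπ : Measurable (fun ω : 𝒳 × 𝒵 × ℝ => (ω.1, ω.2.1)) :=
    measurable_fst.prodMk (measurable_fst.comp measurable_snd)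
  set μXZ := μ.map (fun ω : 𝒳 × 𝒵 × ℝ => (ω.1, ω.2.1)) with hμXZ
  haveI : IsProbabilityMeasure μXZ := Measure.isProbabilityMeasure_map hπ.aemeasurable
  have he : MeasurableEmbedding (MeasurableEquiv.prodAssoc : ((𝒳 × 𝒵) × ℝ) ≃ᵐ (𝒳 × 𝒵 × ℝ)) :=
    MeasurableEquiv.measurableEmbedding _
  have hint : Integrable (fun p : (𝒳 × 𝒵) × ℝ => p.2) (μXZ ⊗ₘ κ) := by
    have h1 := hY
    rw [hμ] at h1
    exact (integrable_map_equiv (μ := μXZ ⊗ₘ κ)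
      MeasurableEquiv.prodAssoc (fun ω : 𝒳 × 𝒵 × ℝ => ω.2.2)).mp h1
  have hf_sm : StronglyMeasurable (fun q : 𝒳 × 𝒵 => ∫ y, y ∂κ q) :=
    StronglyMeasurable.integral_kernel_prod_right
      (f := fun (q : 𝒳 × 𝒵) (y : ℝ) => y) (measurable_snd.stronglyMeasurable)
  have hf_int : Integrable (fun q => ∫ y, y ∂κ q) μXZ := by
    have h := (Measure.integrable_compProd_iff hint.aestronglyMeasurable).mp hint
    refine Integrable.mono' h.2 hf_sm.aestronglyMeasurable ?_
    filter_upwards with q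
    exact norm_integral_le_integral_norm _
  have htotal : ∫ ω, ω.2.2 ∂μ = ∫ q, ∫ y, y ∂κ q ∂μXZ := by
    conv_lhs => rw [hμ]
    rw [integral_map_equiv]
    have : ∀ x : (𝒳 × 𝒵) × ℝ, ((MeasurableEquiv.prodAssoc x : 𝒳 × 𝒵 × ℝ)).2.2 = x.2 :=
      fun x => rfl
    simp only [this]
    rw [Measure.integral_compProd hint]
  refine ⟨htotal, hf_int, ?_⟩
  have hfπ_int : Integrable (fun ω : 𝒳 × 𝒵 × ℝ => ∫ y, y ∂κ (ω.1, ω.2.1)) μ := by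
    have := (integrable_map_measure hf_sm.aestronglyMeasurable hπ.aemeasurable).mp hf_int
    exact this
  refine ae_eq_condExp_of_forall_setIntegral_eq hπ.comap_le hY
    (fun s _ _ => hfπ_int.integrableOn) ?_ ?_
  · rintro s ⟨t, ht, rfl⟩ _
    have hset : (MeasurableEquiv.prodAssoc : ((𝒳 × 𝒵) × ℝ) ≃ᵐ (𝒳 × 𝒵 × ℝ)) ⁻¹'
        ((fun ω : 𝒳 × 𝒵 × ℝ => (ω.1, ω.2.1)) ⁻¹' t) = t ×ˢ Set.univ := by
      ext p
      simp [MeasurableEquiv.prodAssoc, Equiv.prodAssoc]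
    have hl : ∫ ω in (fun ω : 𝒳 × 𝒵 × ℝ => (ω.1, ω.2.1)) ⁻¹' t,
        (∫ y, y ∂κ (ω.1, ω.2.1)) ∂μ = ∫ q in t, ∫ y, y ∂κ q ∂μXZ := by
      rw [hμXZ, ← setIntegral_map ht hf_sm.aestronglyMeasurable hπ.aemeasurable]
    have hr : ∫ ω in (fun ω : 𝒳 × 𝒵 × ℝ => (ω.1, ω.2.1)) ⁻¹' t, ω.2.2 ∂μ
        = ∫ q in t, ∫ y, y ∂κ q ∂μXZ := by
      conv_lhs => rw [hμ]
      rw [he.setIntegral_map, hset]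
      have : ∀ x : (𝒳 × 𝒵) × ℝ, ((MeasurableEquiv.prodAssoc x : 𝒳 × 𝒵 × ℝ)).2.2 = x.2 :=
        fun x => rfl
      simp only [this]
      rw [Measure.setIntegral_compProd ht MeasurableSet.univ hint.integrableOn]
      simp
    rw [hl, hr]
  · refine StronglyMeasurable.aestronglyMeasurable ?_
    exact hf_sm.comp_measurable (measurable_iff_comap_le.mpr le_rfl)
end Aux


/-- **Identification of the deployment effect** (Corollary 5 T1, eqs. (4), (5)).

`μ` is the law of `(X, Z, Y)` under `do(D = 0)` (DSS not deployed) and `ν` the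
law under `do(D = 1, Θ = θ)` (DSS deployed), both disintegrating over their
`(X, Z)`-marginals via a common Markov kernel `κ` (domain-pivot assumption),
with integrable outcome coordinate.  The deployment effect is
`τ = ∫ Y dν − ∫ Y dμ`.

(i) If `ν_{XZ} ≪ μ_{XZ}`, then any measurable version `g` of `E_μ[Y | X, Z]`
satisfies `∫ Y dν = ∫ g dν_{XZ}`, hence `τ = ∫ g dν_{XZ} − ∫ Y dμ`
(pre-deployment evaluation, eq. (4)).
(ii) If `μ_{XZ} ≪ ν_{XZ}`, then any measurable version `h` of `E_ν[Y | X, Z]`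
satisfies `∫ Y dμ = ∫ h dμ_{XZ}`, hence `τ = ∫ Y dν − ∫ h dμ_{XZ}`
(post-deployment evaluation, eq. (5)). -/
theorem deployment_effect_identification
    {𝒳 𝒵 : Type*} [MeasurableSpace 𝒳] [StandardBorelSpace 𝒳]
    [MeasurableSpace 𝒵] [StandardBorelSpace 𝒵]
    (μ ν : Measure (𝒳 × 𝒵 × ℝ)) [IsProbabilityMeasure μ] [IsProbabilityMeasure ν]
    (κ : Kernel (𝒳 × 𝒵) ℝ) [IsMarkovKernel κ]
    (hμ : μ = (μ.map (fun ω => (ω.1, ω.2.1)) ⊗ₘ κ).map MeasurableEquiv.prodAssoc)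
    (hν : ν = (ν.map (fun ω => (ω.1, ω.2.1)) ⊗ₘ κ).map MeasurableEquiv.prodAssoc)
    (hYμ : Integrable (fun ω : 𝒳 × 𝒵 × ℝ => ω.2.2) μ)
    (hYν : Integrable (fun ω : 𝒳 × 𝒵 × ℝ => ω.2.2) ν) :
    -- (i) pre-deployment evaluation
    ((ν.map (fun ω : 𝒳 × 𝒵 × ℝ => (ω.1, ω.2.1)) ≪
        μ.map (fun ω : 𝒳 × 𝒵 × ℝ => (ω.1, ω.2.1))) →
      ∀ g : 𝒳 × 𝒵 → ℝ, Measurable g →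
        ((fun ω : 𝒳 × 𝒵 × ℝ => g (ω.1, ω.2.1)) =ᵐ[μ]
          μ[(fun ω : 𝒳 × 𝒵 × ℝ => ω.2.2) |
            MeasurableSpace.comap (fun ω : 𝒳 × 𝒵 × ℝ => (ω.1, ω.2.1)) inferInstance]) →
        (∫ ω, ω.2.2 ∂ν = ∫ q, g q ∂(ν.map (fun ω : 𝒳 × 𝒵 × ℝ => (ω.1, ω.2.1))) ∧
          ∫ ω, ω.2.2 ∂ν - ∫ ω, ω.2.2 ∂μ =
            ∫ q, g q ∂(ν.map (fun ω : 𝒳 × 𝒵 × ℝ => (ω.1, ω.2.1))) - ∫ ω, ω.2.2 ∂μ)) ∧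
    -- (ii) post-deployment evaluation
    ((μ.map (fun ω : 𝒳 × 𝒵 × ℝ => (ω.1, ω.2.1)) ≪
        ν.map (fun ω : 𝒳 × 𝒵 × ℝ => (ω.1, ω.2.1))) →
      ∀ h : 𝒳 × 𝒵 → ℝ, Measurable h →
        ((fun ω : 𝒳 × 𝒵 × ℝ => h (ω.1, ω.2.1)) =ᵐ[ν]
          ν[(fun ω : 𝒳 × 𝒵 × ℝ => ω.2.2) |
            MeasurableSpace.comap (fun ω : 𝒳 × 𝒵 × ℝ => (ω.1, ω.2.1)) inferInstance]) →
        (∫ ω, ω.2.2 ∂μ = ∫ q, h q ∂(μ.map (fun ω : 𝒳 × 𝒵 × ℝ => (ω.1, ω.2.1))) ∧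
          ∫ ω, ω.2.2 ∂ν - ∫ ω, ω.2.2 ∂μ =
            ∫ ω, ω.2.2 ∂ν - ∫ q, h q ∂(μ.map (fun ω : 𝒳 × 𝒵 × ℝ => (ω.1, ω.2.1))))) := by
  have hπ : Measurable (fun ω : 𝒳 × 𝒵 × ℝ => (ω.1, ω.2.1)) :=
    measurable_fst.prodMk (measurable_fst.comp measurable_snd)
  have hf_sm : StronglyMeasurable (fun q : 𝒳 × 𝒵 => ∫ y, y ∂κ q) :=
    StronglyMeasurable.integral_kernel_prod_right
      (f := fun (q : 𝒳 × 𝒵) (y : ℝ) => y) (measurable_snd.stronglyMeasurable)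
  obtain ⟨hμtot, hμfint, hμce⟩ := aux_main μ κ hμ hYμ
  obtain ⟨hνtot, hνfint, hνce⟩ := aux_main ν κ hν hYν
  constructor
  · intro hac g hgm hg
    have h1 : (fun ω : 𝒳 × 𝒵 × ℝ => g (ω.1, ω.2.1)) =ᵐ[μ]
        (fun ω : 𝒳 × 𝒵 × ℝ => ∫ y, y ∂κ (ω.1, ω.2.1)) := hg.trans hμce.symm
    have hgf : g =ᵐ[μ.map (fun ω : 𝒳 × 𝒵 × ℝ => (ω.1, ω.2.1))]
        (fun q => ∫ y, y ∂κ q) :=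
      (ae_map_iff hπ.aemeasurable (measurableSet_eq_fun hgm hf_sm.measurable)).mpr h1
    have hgf' : g =ᵐ[ν.map (fun ω : 𝒳 × 𝒵 × ℝ => (ω.1, ω.2.1))]
        (fun q => ∫ y, y ∂κ q) := hgf.filter_mono hac.ae_le
    have hkey : ∫ ω, ω.2.2 ∂ν = ∫ q, g q ∂(ν.map (fun ω : 𝒳 × 𝒵 × ℝ => (ω.1, ω.2.1))) :=
      hνtot.trans (integral_congr_ae hgf').symm
    exact ⟨hkey, by rw [hkey]⟩
  · intro hac h hhm hh
    have h1 : (fun ω : 𝒳 × 𝒵 × ℝ => h (ω.1, ω.2.1)) =ᵐ[ν]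
        (fun ω : 𝒳 × 𝒵 × ℝ => ∫ y, y ∂κ (ω.1, ω.2.1)) := hh.trans hνce.symm
    have hgf : h =ᵐ[ν.map (fun ω : 𝒳 × 𝒵 × ℝ => (ω.1, ω.2.1))]
        (fun q => ∫ y, y ∂κ q) :=
      (ae_map_iff hπ.aemeasurable (measurableSet_eq_fun hhm hf_sm.measurable)).mpr h1
    have hgf' : h =ᵐ[μ.map (fun ω : 𝒳 × 𝒵 × ℝ => (ω.1, ω.2.1))]
        (fun q => ∫ y, y ∂κ q) := hgf.filter_mono hac.ae_le
    have hkey : ∫ ω, ω.2.2 ∂μ = ∫ q, h q ∂(μ.map (fun ω : 𝒳 × 𝒵 × ℝ => (ω.1, ω.2.1))) :=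
      hμtot.trans (integral_congr_ae hgf').symm
    exact ⟨hkey, by rw [hkey]⟩
end

section
/- Identification of the retraining effect (Corollary 5 T2, equation (7)): Let μ_t be the law of (X, Z, Y) under deployment of the current parameters θ_t and ν_{t+1} the law under deployment of the retrained parameters θ_{t+1}, both with integrable outcome coordinate, admitting a common disintegration kernel κ of the outcome given (X,Z), and with (ν_{t+1})_{XZ} ≪ (μ_t)_{XZ}. Then for every measurable g : 𝒳 × 𝒵 → ℝ that is a version of the conditional expectation of Y given the (X,Z)-coordinates under μ_t, the retraining effect satisfies ρ(θ_{t+1}, θ_t) = ∫ g d(ν_{t+1})_{XZ} − ∫ Y dμ_t; hence ρ is computable from the current-deployment law μ_t together with the (X,Z)-marginal of the retrained-deployment law alone, without observing outcomes under the retrained model. -/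
open MeasureTheory ProbabilityTheory

/-!
Under the disintegration `μ = μ_XZ ⊗ κ`, the kernel mean `q ↦ ∫ y dκ(q)` has the same integral
as `Y` over every `(X, Z)`-measurable set, so it is a version of `E_μ[Y | X, Z]`. Hence `g` agrees
with it `μ_XZ`-a.e., and so `ν_XZ`-a.e. by absolute continuity; since `ν` disintegrates with the
same kernel, `∫ Y dν = ∫ (∫ y dκ) dν_XZ`.
-/

theorem ae_eq_condExp_comap_of_forall_setIntegral_eq {Ω S E : Type*} {mΩ : MeasurableSpace Ω}
    [mS : MeasurableSpace S] [NormedAddCommGroup E] [NormedSpace ℝ E] [CompleteSpace E]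
    {P : Measure Ω} [IsFiniteMeasure P] {π : Ω → S} (hπ : Measurable π)
    {Y : Ω → E} (hY : Integrable Y P) {f : S → E} (hf : StronglyMeasurable f)
    (hfi : Integrable f (P.map π))
    (hset : ∀ t, MeasurableSet t → ∫ ω in π ⁻¹' t, Y ω ∂P = ∫ q in t, f q ∂(P.map π)) :
    f ∘ π =ᵐ[P] P[Y | mS.comap π] := by
  have hfπ : Integrable (f ∘ π) P :=
    (integrable_map_measure hf.aestronglyMeasurable hπ.aemeasurable).mp hfi
  refine ae_eq_condExp_of_forall_setIntegral_eq hπ.comap_le hY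
    (fun _ _ _ => hfπ.integrableOn) ?_ ?_
  · rintro _ ⟨t, ht, rfl⟩ -
    rw [hset t ht, setIntegral_map ht hf.aestronglyMeasurable hπ.aemeasurable]
    rfl
  · exact (hf.comp_measurable (comap_measurable π)).aestronglyMeasurable

section Disintegration

variable {S Ω : Type*} [MeasurableSpace S] [MeasurableSpace Ω] (e : S × ℝ ≃ᵐ Ω)
  {κ : Kernel S ℝ} {m : Measure S} {P : Measure Ω}

theorem integrable_snd_compProd_of_eq_map (hP : P = (m ⊗ₘ κ).map e)
    (hY : Integrable (fun ω => (e.symm ω).2) P) :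
    Integrable (fun p : S × ℝ => p.2) (m ⊗ₘ κ) := by
  subst hP
  simpa [Function.comp_def] using (integrable_map_equiv e _).mp hY

variable [IsSFiniteKernel κ] [SFinite m]

omit [SFinite m] in
theorem stronglyMeasurable_integral_id_kernel : StronglyMeasurable fun q => ∫ y, y ∂κ q :=
  measurable_snd.stronglyMeasurable.integral_kernel_prod_right'

theorem setIntegral_preimage_of_eq_map_compProd (hP : P = (m ⊗ₘ κ).map e)
    (hY : Integrable (fun ω => (e.symm ω).2) P) {t : Set S} (ht : MeasurableSet t) :
    ∫ ω in (fun ω => (e.symm ω).1) ⁻¹' t, (e.symm ω).2 ∂P = ∫ q in t, ∫ y, y ∂κ q ∂m := by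
  have hY' := integrable_snd_compProd_of_eq_map e hP hY
  subst hP
  have hpre : e ⁻¹' ((fun ω => (e.symm ω).1) ⁻¹' t) = t ×ˢ Set.univ := by ext; simp
  rw [setIntegral_map_equiv, hpre]
  simp only [MeasurableEquiv.symm_apply_apply]
  rw [Measure.setIntegral_compProd ht MeasurableSet.univ hY'.integrableOn]
  simp

theorem integral_of_eq_map_compProd (hP : P = (m ⊗ₘ κ).map e)
    (hY : Integrable (fun ω => (e.symm ω).2) P) :
    ∫ ω, (e.symm ω).2 ∂P = ∫ q, ∫ y, y ∂κ q ∂m := by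
  simpa using setIntegral_preimage_of_eq_map_compProd e hP hY MeasurableSet.univ

theorem integral_kernel_ae_eq_condExp_of_eq_map_compProd [IsFiniteMeasure P]
    (hP : P = (m ⊗ₘ κ).map e)
    (hm : P.map (fun ω => (e.symm ω).1) = m)
    (hY : Integrable (fun ω => (e.symm ω).2) P) :
    (fun ω => ∫ y, y ∂κ (e.symm ω).1) =ᵐ[P]
      P[fun ω => (e.symm ω).2 | MeasurableSpace.comap (fun ω => (e.symm ω).1) inferInstance] := by
  have hπ : Measurable fun ω => (e.symm ω).1 := measurable_fst.comp e.symm.measurable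
  refine ae_eq_condExp_comap_of_forall_setIntegral_eq hπ hY
    stronglyMeasurable_integral_id_kernel ?_ ?_
  · rw [hm]
    exact (integrable_snd_compProd_of_eq_map e hP hY).integral_compProd
  · intro t ht
    rw [hm]
    exact setIntegral_preimage_of_eq_map_compProd e hP hY ht

end Disintegration

theorem retraining_effect_identification_general
    {𝒳 𝒵 : Type*} [MeasurableSpace 𝒳] [MeasurableSpace 𝒵]
    (μt νt1 : Measure (𝒳 × 𝒵 × ℝ)) [IsProbabilityMeasure μt] [IsProbabilityMeasure νt1]
    (κ : Kernel (𝒳 × 𝒵) ℝ) [IsMarkovKernel κ]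
    (hμt : μt = (μt.map (fun ω => (ω.1, ω.2.1)) ⊗ₘ κ).map MeasurableEquiv.prodAssoc)
    (hνt1 : νt1 = (νt1.map (fun ω => (ω.1, ω.2.1)) ⊗ₘ κ).map MeasurableEquiv.prodAssoc)
    (hYμt : Integrable (fun ω : 𝒳 × 𝒵 × ℝ => ω.2.2) μt)
    (hYνt1 : Integrable (fun ω : 𝒳 × 𝒵 × ℝ => ω.2.2) νt1)
    (hac : νt1.map (fun ω : 𝒳 × 𝒵 × ℝ => (ω.1, ω.2.1)) ≪
      μt.map (fun ω : 𝒳 × 𝒵 × ℝ => (ω.1, ω.2.1)))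
    (g : 𝒳 × 𝒵 → ℝ) (hg : Measurable g)
    (hgμt : (fun ω : 𝒳 × 𝒵 × ℝ => g (ω.1, ω.2.1)) =ᵐ[μt]
      μt[(fun ω : 𝒳 × 𝒵 × ℝ => ω.2.2) |
        MeasurableSpace.comap (fun ω : 𝒳 × 𝒵 × ℝ => (ω.1, ω.2.1)) inferInstance]) :
    ∫ ω, ω.2.2 ∂νt1 - ∫ ω, ω.2.2 ∂μt =
      ∫ q, g q ∂(νt1.map (fun ω : 𝒳 × 𝒵 × ℝ => (ω.1, ω.2.1))) - ∫ ω, ω.2.2 ∂μt := by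
  have hπ : Measurable fun ω : 𝒳 × 𝒵 × ℝ => (ω.1, ω.2.1) := by fun_prop
  -- `fun ω => (MeasurableEquiv.prodAssoc.symm ω).1` is `fun ω => (ω.1, ω.2.1)` by unfolding.
  have hfμt :=
    integral_kernel_ae_eq_condExp_of_eq_map_compProd MeasurableEquiv.prodAssoc hμt rfl hYμt
  have hgf : g =ᵐ[μt.map fun ω => (ω.1, ω.2.1)] fun q => ∫ y, y ∂κ q :=
    (ae_map_iff hπ.aemeasurable
      (measurableSet_eq_fun hg stronglyMeasurable_integral_id_kernel.measurable)).mpr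
      (hgμt.trans hfμt.symm)
  have hν : ∫ ω, ω.2.2 ∂νt1 = ∫ q, ∫ y, y ∂κ q ∂(νt1.map fun ω => (ω.1, ω.2.1)) :=
    integral_of_eq_map_compProd MeasurableEquiv.prodAssoc hνt1 hYνt1
  rw [hν, integral_congr_ae (hac.ae_le hgf)]

/-- **Identification of the retraining effect** (Corollary 5 T2, eq. (7)).

`μt` is the law of `(X, Z, Y)` under deployment of the current parameters
`do(D = 1, Θ = θ_t)` and `νt1` the law under deployment of the retrained
parameters `do(D = 1, Θ = θ_{t+1})`; both disintegrate over their
`(X, Z)`-marginals via a common Markov kernel `κ` (domain-pivot assumption),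
the outcome coordinate is integrable under both, and
`(ν_{t+1})_{XZ} ≪ (μ_t)_{XZ}`.  Then for every measurable version `g` of
`E_{μ_t}[Y | X, Z]`, the retraining effect
`ρ(θ_{t+1}, θ_t) = ∫ Y dν_{t+1} − ∫ Y dμ_t` equals
`∫ g d(ν_{t+1})_{XZ} − ∫ Y dμ_t`: it is computable without observing outcomes
under the retrained model. -/
theorem retraining_effect_identification
    {𝒳 𝒵 : Type*} [MeasurableSpace 𝒳] [StandardBorelSpace 𝒳]
    [MeasurableSpace 𝒵] [StandardBorelSpace 𝒵]
    (μt νt1 : Measure (𝒳 × 𝒵 × ℝ)) [IsProbabilityMeasure μt] [IsProbabilityMeasure νt1]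
    (κ : Kernel (𝒳 × 𝒵) ℝ) [IsMarkovKernel κ]
    (hμt : μt = (μt.map (fun ω => (ω.1, ω.2.1)) ⊗ₘ κ).map MeasurableEquiv.prodAssoc)
    (hνt1 : νt1 = (νt1.map (fun ω => (ω.1, ω.2.1)) ⊗ₘ κ).map MeasurableEquiv.prodAssoc)
    (hYμt : Integrable (fun ω : 𝒳 × 𝒵 × ℝ => ω.2.2) μt)
    (hYνt1 : Integrable (fun ω : 𝒳 × 𝒵 × ℝ => ω.2.2) νt1)
    (hac : νt1.map (fun ω : 𝒳 × 𝒵 × ℝ => (ω.1, ω.2.1)) ≪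
      μt.map (fun ω : 𝒳 × 𝒵 × ℝ => (ω.1, ω.2.1)))
    (g : 𝒳 × 𝒵 → ℝ) (hg : Measurable g)
    (hgμt : (fun ω : 𝒳 × 𝒵 × ℝ => g (ω.1, ω.2.1)) =ᵐ[μt]
      μt[(fun ω : 𝒳 × 𝒵 × ℝ => ω.2.2) |
        MeasurableSpace.comap (fun ω : 𝒳 × 𝒵 × ℝ => (ω.1, ω.2.1)) inferInstance]) :
    ∫ ω, ω.2.2 ∂νt1 - ∫ ω, ω.2.2 ∂μt =
      ∫ q, g q ∂(νt1.map (fun ω : 𝒳 × 𝒵 × ℝ => (ω.1, ω.2.1))) - ∫ ω, ω.2.2 ∂μt :=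
  retraining_effect_identification_general μt νt1 κ hμt hνt1 hYμt hYνt1 hac g hg hgμt
end

section
/- Identification under sample selection bias and selective labelling (Section 5, equation (10)): Let μ be a probability measure on 𝒳 × 𝒵 × ℝ × {0,1} (the source-domain law of (X, Z, Y, S), where S is the combined selection/labelling indicator) with μ(S=1) > 0, and let μ_S denote the conditional measure μ(· | S=1) pushed forward to 𝒳 × 𝒵 × ℝ. Let ν be a probability measure on 𝒳 × 𝒵 × ℝ (the target-domain law of (X, Z, Y)). Assume the outcome coordinate Y is integrable under μ_S and under ν, assume μ_S and ν admit a common disintegration kernel κ of the outcome given (X,Z) (encoding the conditional independence Y ⫫ D, Θ, S | X, Z), and assume ν_{XZ} ≪ (μ_S)_{XZ}. Then for every measurable g : 𝒳 × 𝒵 → ℝ that is a version of the conditional expectation of Y given the (X,Z)-coordinates under the selected source law μ_S, the conditional expectation of Y given the X-coordinate under ν equals, ν-almost everywhere, the conditional expectation of g(X,Z) given the X-coordinate under ν. In particular the unbiased target regression function E[Y | X, do(D=d, Θ=θ)] is identified from selection-biased, selectively labelled source data together with the target (X,Z)-marginal. -/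
/-!
A common disintegration kernel `κ` makes `p ↦ ∫ y ∂κ p` a version of `E[Y | X, Z]` under both
`μS` and `ν`. A version `g` computed under `μS` agrees with it `(μS)_{XZ}`-a.e., hence
`ν_{XZ}`-a.e. by absolute continuity, so `g (X, Z)` is also a version of `E_ν[Y | X, Z]`, and the
tower property yields the identification of `E_ν[Y | X]`.
-/

open MeasureTheory ProbabilityTheory

section

variable {Ω α : Type*} [MeasurableSpace Ω] [MeasurableSpace α]

theorem stronglyMeasurable_kernel_mean (κ : Kernel α ℝ) [IsSFiniteKernel κ] :
    StronglyMeasurable fun a => ∫ y, y ∂κ a :=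
  StronglyMeasurable.integral_kernel_prod_right (f := fun (_ : α) (y : ℝ) => y)
    measurable_snd.stronglyMeasurable

theorem condExp_comap_ae_eq_integral_kernel_of_map_eq_compProd
    {ρ : Measure Ω} [IsFiniteMeasure ρ] {κ : Kernel α ℝ} [IsSFiniteKernel κ]
    {π : Ω → α} {Y : Ω → ℝ} (hπ : Measurable π) (hY : Measurable Y) (hYint : Integrable Y ρ)
    (hdis : ρ.map (fun ω => (π ω, Y ω)) = ρ.map π ⊗ₘ κ) :
    (fun ω => ∫ y, y ∂κ (π ω)) =ᵐ[ρ] ρ[Y | MeasurableSpace.comap π inferInstance] := by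
  have hπY : Measurable fun ω => (π ω, Y ω) := hπ.prodMk hY
  have hsnd : Integrable (fun p : α × ℝ => p.2) (ρ.map π ⊗ₘ κ) := by
    rw [← hdis]
    exact (integrable_map_measure measurable_snd.aestronglyMeasurable hπY.aemeasurable).mpr hYint
  have hmean := stronglyMeasurable_kernel_mean κ
  have hmean_int : Integrable (fun a => ∫ y, y ∂κ a) (ρ.map π) := hsnd.integral_compProd
  have hsetIntegral (t : Set α) (ht : MeasurableSet t) :
      ∫ ω in π ⁻¹' t, ∫ y, y ∂κ (π ω) ∂ρ = ∫ ω in π ⁻¹' t, Y ω ∂ρ :=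
    calc ∫ ω in π ⁻¹' t, ∫ y, y ∂κ (π ω) ∂ρ = ∫ a in t, ∫ y, y ∂κ a ∂ρ.map π :=
          (setIntegral_map ht hmean.aestronglyMeasurable hπ.aemeasurable).symm
      _ = ∫ p in t ×ˢ Set.univ, p.2 ∂ρ.map π ⊗ₘ κ := by
          rw [Measure.setIntegral_compProd ht MeasurableSet.univ hsnd.integrableOn]
          simp only [Measure.restrict_univ]
      _ = ∫ ω in π ⁻¹' t, Y ω ∂ρ := by
          rw [← hdis, setIntegral_map (ht.prod MeasurableSet.univ)
            measurable_snd.aestronglyMeasurable hπY.aemeasurable, Set.mk_preimage_prod,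
            Set.preimage_univ, Set.inter_univ]
  have := isFiniteMeasure_trim (μ := ρ) hπ.comap_le
  refine ae_eq_condExp_of_forall_setIntegral_eq hπ.comap_le hYint
    (fun _ _ _ => ((integrable_map_measure hmean.aestronglyMeasurable hπ.aemeasurable).mp
      hmean_int).integrableOn) ?_
    (hmean.comp_measurable (comap_measurable π)).aestronglyMeasurable
  rintro _ ⟨t, ht, rfl⟩ -
  exact hsetIntegral t ht

theorem comp_ae_eq_of_absolutelyContinuous_map {β : Type*} [MeasurableSpace β] [MeasurableEq β]
    {ρ₁ ρ₂ : Measure Ω} {π : Ω → α} (hπ : Measurable π) {f g : α → β} (hf : Measurable f)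
    (hg : Measurable g) (hac : ρ₂.map π ≪ ρ₁.map π) (h : f ∘ π =ᵐ[ρ₁] g ∘ π) :
    f ∘ π =ᵐ[ρ₂] g ∘ π :=
  ae_eq_comp hπ.aemeasurable
    (hac.ae_eq ((ae_map_iff hπ.aemeasurable (measurableSet_eq_fun hf hg)).mpr h))

end

theorem condExp_ae_eq_condExp_of_ae_eq_condExp_of_le {Ω E : Type*} [NormedAddCommGroup E]
    [NormedSpace ℝ E] [CompleteSpace E] {m₁ m₂ m₀ : MeasurableSpace Ω} {μ : Measure Ω}
    {f h : Ω → E} (h₁₂ : m₁ ≤ m₂) (hm₂ : m₂ ≤ m₀) [SigmaFinite (μ.trim hm₂)]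
    (hh : h =ᵐ[μ] μ[f | m₂]) :
    μ[f | m₁] =ᵐ[μ] μ[h | m₁] :=
  (condExp_condExp_of_le h₁₂ hm₂).symm.trans (condExp_congr_ae hh.symm)

theorem map_eq_compProd_of_eq_map_prodAssoc {α β γ : Type*} [MeasurableSpace α]
    [MeasurableSpace β] [MeasurableSpace γ] {ρ : Measure (α × β × γ)} {ξ : Measure (α × β)}
    {κ : Kernel (α × β) γ} (h : ρ = (ξ ⊗ₘ κ).map MeasurableEquiv.prodAssoc) :
    ρ.map (fun ω => ((ω.1, ω.2.1), ω.2.2)) = ξ ⊗ₘ κ := by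
  rw [h]
  exact MeasurableEquiv.prodAssoc.map_symm_map

theorem identification_under_selection_bias_general
    {𝒳 𝒵 : Type*} [MeasurableSpace 𝒳]
    [MeasurableSpace 𝒵]
    (μ : Measure (𝒳 × 𝒵 × ℝ × Bool)) [IsProbabilityMeasure μ]
    (ν : Measure (𝒳 × 𝒵 × ℝ)) [IsProbabilityMeasure ν]
    (μS : Measure (𝒳 × 𝒵 × ℝ))
    (hμS : μS = (ProbabilityTheory.cond μ {ω : 𝒳 × 𝒵 × ℝ × Bool | ω.2.2.2 = true}).map
      (fun ω : 𝒳 × 𝒵 × ℝ × Bool => (ω.1, ω.2.1, ω.2.2.1)))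
    (κ : Kernel (𝒳 × 𝒵) ℝ) [IsMarkovKernel κ]
    (hdisμS : μS = (μS.map (fun ω => (ω.1, ω.2.1)) ⊗ₘ κ).map MeasurableEquiv.prodAssoc)
    (hdisν : ν = (ν.map (fun ω => (ω.1, ω.2.1)) ⊗ₘ κ).map MeasurableEquiv.prodAssoc)
    (hYμS : Integrable (fun ω : 𝒳 × 𝒵 × ℝ => ω.2.2) μS)
    (hYν : Integrable (fun ω : 𝒳 × 𝒵 × ℝ => ω.2.2) ν)
    (hac : ν.map (fun ω : 𝒳 × 𝒵 × ℝ => (ω.1, ω.2.1)) ≪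
      μS.map (fun ω : 𝒳 × 𝒵 × ℝ => (ω.1, ω.2.1)))
    (g : 𝒳 × 𝒵 → ℝ) (hg : Measurable g)
    (hgμS : (fun ω : 𝒳 × 𝒵 × ℝ => g (ω.1, ω.2.1)) =ᵐ[μS]
      μS[(fun ω : 𝒳 × 𝒵 × ℝ => ω.2.2) |
        MeasurableSpace.comap (fun ω : 𝒳 × 𝒵 × ℝ => (ω.1, ω.2.1)) inferInstance]) :
    ν[(fun ω : 𝒳 × 𝒵 × ℝ => ω.2.2) |
        MeasurableSpace.comap (fun ω : 𝒳 × 𝒵 × ℝ => ω.1) inferInstance] =ᵐ[ν]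
      ν[(fun ω : 𝒳 × 𝒵 × ℝ => g (ω.1, ω.2.1)) |
        MeasurableSpace.comap (fun ω : 𝒳 × 𝒵 × ℝ => ω.1) inferInstance] := by
  set π : 𝒳 × 𝒵 × ℝ → 𝒳 × 𝒵 := fun ω => (ω.1, ω.2.1)
  have hπ : Measurable π := by fun_prop
  have hY : Measurable fun ω : 𝒳 × 𝒵 × ℝ => ω.2.2 := by fun_prop
  have : IsFiniteMeasure μS := hμS ▸ inferInstance
  have hμS_mean := condExp_comap_ae_eq_integral_kernel_of_map_eq_compProd hπ hY hYμS
    (map_eq_compProd_of_eq_map_prodAssoc hdisμS)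
  have hν_mean := condExp_comap_ae_eq_integral_kernel_of_map_eq_compProd hπ hY hYν
    (map_eq_compProd_of_eq_map_prodAssoc hdisν)
  have hgν : g ∘ π =ᵐ[ν] ν[fun ω => ω.2.2 | MeasurableSpace.comap π inferInstance] :=
    (comp_ae_eq_of_absolutelyContinuous_map hπ hg
      (stronglyMeasurable_kernel_mean κ).measurable hac
      (hgμS.trans hμS_mean.symm)).trans hν_mean
  have := isFiniteMeasure_trim (μ := ν) hπ.comap_le
  exact condExp_ae_eq_condExp_of_ae_eq_condExp_of_le
    (measurable_fst.comp (comap_measurable π)).comap_le hπ.comap_le hgν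

/-- **Identification under sample selection bias and selective labelling**
(Section 5, eq. (10)).

`μ` is the source-domain law of `(X, Z, Y, S)` on `𝒳 × 𝒵 × ℝ × Bool`, where
`S` combines sample selection and labelling; data are only observed on the
event `S = true`, which has positive probability.  `μS` is the conditional law
`μ(· | S = 1)` pushed forward to `𝒳 × 𝒵 × ℝ`, and `ν` is the target-domain law
of `(X, Z, Y)`.  The assumption `Y ⫫ D, Θ, S | X, Z` is encoded by a common
Markov kernel `κ` disintegrating both `μS` and `ν` over their
`(X, Z)`-marginals; the outcome coordinate is integrable under `μS` and `ν`,
and `ν_{XZ} ≪ (μS)_{XZ}`.  Then for every measurable version `g` of the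
selected-source regression function `E_{μS}[Y | X, Z]`, the target regression
function satisfies `E_ν[Y | X] = E_ν[g(X, Z) | X]`, `ν`-a.e. -/
theorem identification_under_selection_bias
    {𝒳 𝒵 : Type*} [MeasurableSpace 𝒳] [StandardBorelSpace 𝒳]
    [MeasurableSpace 𝒵] [StandardBorelSpace 𝒵]
    (μ : Measure (𝒳 × 𝒵 × ℝ × Bool)) [IsProbabilityMeasure μ]
    (ν : Measure (𝒳 × 𝒵 × ℝ)) [IsProbabilityMeasure ν]
    (hS : 0 < μ {ω : 𝒳 × 𝒵 × ℝ × Bool | ω.2.2.2 = true})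
    (μS : Measure (𝒳 × 𝒵 × ℝ))
    (hμS : μS = (ProbabilityTheory.cond μ {ω : 𝒳 × 𝒵 × ℝ × Bool | ω.2.2.2 = true}).map
      (fun ω : 𝒳 × 𝒵 × ℝ × Bool => (ω.1, ω.2.1, ω.2.2.1)))
    (κ : Kernel (𝒳 × 𝒵) ℝ) [IsMarkovKernel κ]
    (hdisμS : μS = (μS.map (fun ω => (ω.1, ω.2.1)) ⊗ₘ κ).map MeasurableEquiv.prodAssoc)
    (hdisν : ν = (ν.map (fun ω => (ω.1, ω.2.1)) ⊗ₘ κ).map MeasurableEquiv.prodAssoc)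
    (hYμS : Integrable (fun ω : 𝒳 × 𝒵 × ℝ => ω.2.2) μS)
    (hYν : Integrable (fun ω : 𝒳 × 𝒵 × ℝ => ω.2.2) ν)
    (hac : ν.map (fun ω : 𝒳 × 𝒵 × ℝ => (ω.1, ω.2.1)) ≪
      μS.map (fun ω : 𝒳 × 𝒵 × ℝ => (ω.1, ω.2.1)))
    (g : 𝒳 × 𝒵 → ℝ) (hg : Measurable g)
    (hgμS : (fun ω : 𝒳 × 𝒵 × ℝ => g (ω.1, ω.2.1)) =ᵐ[μS]
      μS[(fun ω : 𝒳 × 𝒵 × ℝ => ω.2.2) |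
        MeasurableSpace.comap (fun ω : 𝒳 × 𝒵 × ℝ => (ω.1, ω.2.1)) inferInstance]) :
    ν[(fun ω : 𝒳 × 𝒵 × ℝ => ω.2.2) |
        MeasurableSpace.comap (fun ω : 𝒳 × 𝒵 × ℝ => ω.1) inferInstance] =ᵐ[ν]
      ν[(fun ω : 𝒳 × 𝒵 × ℝ => g (ω.1, ω.2.1)) |
        MeasurableSpace.comap (fun ω : 𝒳 × 𝒵 × ℝ => ω.1) inferInstance] :=
  identification_under_selection_bias_general μ ν μS hμS κ hdisμS hdisν hYμS hYν hac g hg hgμS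
end

section
/- Non-identifiability witness (Proposition 3, explicit construction): Let d, d' ∈ {0,1} and θ, θ' ∈ ℝ satisfy (d, θ) ≠ (d', θ') and (d = 1 and d' = 1) if and only if θ ≠ θ'. For i ∈ {1,2} define f_i : ℝ × ℝ → ℝ by f_i(x, t) := t·x + i·𝟙{t ≠ θ'} (the structural equation Ŷ = f_i(X, Θ)) and h_i : ℝ × ℝ × {0,1} → ℝ by h_i(x, ŷ, D) := x + 𝟙{D=1}·ŷ + i·𝟙{D ≠ d'} (the structural equation Y = h_i(X, Ŷ, D)). Then: (a) the two source-domain outcome maps coincide identically, i.e. h₁(x, f₁(x, θ'), d') = h₂(x, f₂(x, θ'), d') for every x ∈ ℝ, so that with X standard Gaussian the source-domain joint laws of (X, Y) under the two models (at D=d', Θ=θ') are equal; but (b) the target-domain outcome maps differ everywhere, i.e. h₁(x, f₁(x, θ), d) ≠ h₂(x, f₂(x, θ), d) for every x ∈ ℝ, so the target-domain regression functions E[Y | X=x, do(D=d, Θ=θ)] of the two models differ at every x. Hence E[Y | X, do(D=d, Θ=θ)] is not identifiable from the source-domain law P(X, Y | do(D=d', Θ=θ')) alone. -/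
open MeasureTheory ProbabilityTheory

/-- The structural equation `Ŷ = f_i(X, Θ)` of model `i`:
`f_i(x, t) = t·x + i·𝟙{t ≠ θ'}`. -/
noncomputable def predModel (i θ' : ℝ) (x t : ℝ) : ℝ :=
  t * x + i * (if t ≠ θ' then 1 else 0)

/-- The structural equation `Y = h_i(X, Ŷ, D)` of model `i`
(`D : Bool`, with `true` playing the role of `D = 1`):
`h_i(x, yhat, D) = x + 𝟙{D = 1}·yhat + i·𝟙{D ≠ d'}`. -/
noncomputable def outcomeModel (i : ℝ) (d' : Bool) (x yhat : ℝ) (D : Bool) : ℝ :=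
  x + (if D = true then yhat else 0) + i * (if D ≠ d' then 1 else 0)

/-- **Non-identifiability witness** (Proposition 3, explicit construction).

Let `d, d' ∈ {0,1}` and `θ, θ' ∈ ℝ` with `(d, θ) ≠ (d', θ')` and
`(d = 1 ∧ d' = 1) ↔ θ ≠ θ'`.  Then:
(a) the two source-domain outcome maps coincide identically, so with
`X ~ N(0,1)` the source-domain joint laws of `(X, Y)` of the two models (at
`D = d'`, `Θ = θ'`) are equal; but
(b) the target-domain outcome maps (at `D = d`, `Θ = θ`), i.e. the
target-domain regression functions, differ at every `x`.

Hence `E[Y | X, do(D = d, Θ = θ)]` is not identifiable from the source-domain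
law `P(X, Y | do(D = d', Θ = θ'))` alone. -/
theorem target_regression_not_identifiable_witness
    (d d' : Bool) (θ θ' : ℝ)
    (hne : (d, θ) ≠ (d', θ'))
    (hiff : (d = true ∧ d' = true) ↔ θ ≠ θ') :
    (∀ x : ℝ, outcomeModel 1 d' x (predModel 1 θ' x θ') d' =
      outcomeModel 2 d' x (predModel 2 θ' x θ') d') ∧
    ((gaussianReal 0 1).map (fun x => (x, outcomeModel 1 d' x (predModel 1 θ' x θ') d')) =
      (gaussianReal 0 1).map (fun x => (x, outcomeModel 2 d' x (predModel 2 θ' x θ') d'))) ∧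
    (∀ x : ℝ, outcomeModel 1 d' x (predModel 1 θ' x θ) d ≠
      outcomeModel 2 d' x (predModel 2 θ' x θ) d) := by
  have ha : ∀ x : ℝ, outcomeModel 1 d' x (predModel 1 θ' x θ') d' =
      outcomeModel 2 d' x (predModel 2 θ' x θ') d' := by
    intro x
    simp [outcomeModel, predModel]
  refine ⟨ha, ?_, ?_⟩
  · congr 1
    funext x
    rw [ha x]
  · intro x
    rcases Bool.eq_false_or_eq_true d with hd | hd <;>
      rcases Bool.eq_false_or_eq_true d' with hd' | hd' <;>
        subst hd <;> subst hd' <;> simp_all [outcomeModel, predModel]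
end

section
/- Necessity of the domain-pivot condition (witness for the 'only if' direction of Proposition 4, XOR construction): Let d, d' ∈ {0,1} with d ≠ d', and let E and E' be independent random variables, each uniformly distributed on {0,1}, on some probability space. For each domain value D ∈ {0,1} define, in model 1: Z₁(D) := (D + E) mod 2 if D = d' and Z₁(D) := (D + E') mod 2 if D = d, and Y₁(D) := (Z₁(D) + E) mod 2; and in model 2: Z₂(D) := (D + E) mod 2 and Y₂(D) := (Z₂(D) + E) mod 2. Then: (a) the joint laws of (Z₁(d'), Y₁(d')) and of (Z₂(d'), Y₂(d')) coincide (in both models, at D=d', the pivot variable is uniform on {0,1} and the outcome equals d' almost surely); (b) the laws of Z₁(d) and Z₂(d) coincide (both uniform on {0,1}); but (c) E[Y₁(d)] = 1/2 while Y₂(d) = d almost surely, so E[Y₂(d)] = d ≠ 1/2. Hence two models can agree on the full source-domain law of (Z, Y) and on the target-domain law of Z while disagreeing on the target-domain expectation of Y, witnessing that without the conditional independence Y ⫫ D | X, Z the target quantity E[Y | X, do(D=d)] is not identifiable from {P(X, Y, Z | do(D=d')), P(X, Z | do(D=d))}. -/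
/-!
At `D = d'` the two models coincide pointwise. At `D = d` the pivot is `d ⊕ E'` in model 1 and
`d ⊕ E` in model 2, two fair coins. In model 2 the two occurrences of `E` cancel, so
`Y₂(d) = d`; in model 1, `Y₁(d) = E ⊕ (d ⊕ E')` is the XOR of a fair coin with an independent
bit, hence again a fair coin.
-/

open MeasureTheory ProbabilityTheory

namespace MeasureTheory

variable {Ω : Type*} [MeasurableSpace Ω] {P : Measure Ω} {X Y : Ω → Bool}

theorem integral_ite_bool_eq_measureReal (hX : Measurable X) :
    ∫ ω, (if X ω then (1 : ℝ) else 0) ∂P = P.real (X ⁻¹' {true}) := by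
  rw [← integral_indicator_one (hX (measurableSet_singleton true))]
  congr 1 with ω
  by_cases h : X ω <;> simp [h]

variable [IsProbabilityMeasure P]

theorem measure_preimage_bool_eq_half (hX : Measurable X) (hX_true : P (X ⁻¹' {true}) = 1 / 2)
    (b : Bool) : P (X ⁻¹' {b}) = 1 / 2 := by
  cases b
  · have hcompl : X ⁻¹' {false} = (X ⁻¹' {true})ᶜ := by ext; simp
    rw [hcompl, prob_compl_eq_one_sub (hX (measurableSet_singleton _)), hX_true, one_div,
      ENNReal.one_sub_inv_two]
  · exact hX_true

theorem map_eq_map_of_measure_preimage_true_eq_half {Ω' : Type*} [MeasurableSpace Ω']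
    {P' : Measure Ω'} [IsProbabilityMeasure P'] {X' : Ω' → Bool}
    (hX : Measurable X) (hX' : Measurable X') (hX_true : P (X ⁻¹' {true}) = 1 / 2)
    (hX'_true : P' (X' ⁻¹' {true}) = 1 / 2) : P.map X = P'.map X' := by
  refine Measure.ext_of_singleton fun b => ?_
  rw [Measure.map_apply hX (measurableSet_singleton b),
    Measure.map_apply hX' (measurableSet_singleton b),
    measure_preimage_bool_eq_half hX hX_true, measure_preimage_bool_eq_half hX' hX'_true]

theorem measure_xor_eq_true_of_indepFun (hX : Measurable X) (hY : Measurable Y)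
    (hXY : IndepFun X Y P) (hX_true : P (X ⁻¹' {true}) = 1 / 2) :
    P ((fun ω => xor (X ω) (Y ω)) ⁻¹' {true}) = 1 / 2 := by
  have hs : MeasurableSet {p : Bool × Bool | xor p.1 p.2 = true} := .of_discrete
  have hslice : ∀ y, P.map X {x | xor x y = true} = 1 / 2 := fun y => by
    have : {x | xor x y = true} = {!y} := by ext x; cases x <;> cases y <;> simp
    rw [this, Measure.map_apply hX (measurableSet_singleton _),
      measure_preimage_bool_eq_half hX hX_true]
  -- By independence the law of `(X, Y)` is a product; each slice `{x | x ⊕ y}` is one point.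
  calc P ((fun ω => xor (X ω) (Y ω)) ⁻¹' {true})
      = P.map (fun ω => (X ω, Y ω)) {p | xor p.1 p.2 = true} :=
        (Measure.map_apply (hX.prodMk hY) hs).symm
    _ = ((P.map X).prod (P.map Y)) {p | xor p.1 p.2 = true} := by
        rw [(indepFun_iff_map_prod_eq_prod_map_map hX.aemeasurable hY.aemeasurable).1 hXY]
    _ = 1 / 2 := by
        rw [Measure.prod_apply_symm hs]
        simp only [Set.preimage_ofPred_eq, hslice, lintegral_const]
        rw [Measure.map_apply hY .univ, Set.preimage_univ, measure_univ, mul_one]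

end MeasureTheory

/-- **Necessity of the domain-pivot condition** (witness for the 'only if'
direction of Proposition 4, XOR construction).

`d, d' : Bool` with `d ≠ d'` are the two domain values, and `E, E'` are
independent fair-coin random variables on `(Ω, P)`.  Model 1 sets
`Z₁(D) = xor D E` if `D = d'` and `Z₁(D) = xor D E'` if `D ≠ d'` (i.e. `D = d`),
with `Y₁(D) = xor (Z₁ D) E`; model 2 sets `Z₂(D) = xor D E` and
`Y₂(D) = xor (Z₂ D) E`.  Then:
(a) the joint laws of `(Z₁(d'), Y₁(d'))` and `(Z₂(d'), Y₂(d'))` coincide;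
(b) the laws of `Z₁(d)` and `Z₂(d)` coincide; but
(c) `E[Y₁(d)] = 1/2` while `Y₂(d) = d` everywhere, and `𝟙{d = 1} ≠ 1/2`.

Hence `E[Y | X, do(D = d)]` is not identifiable from
`{P(X, Y, Z | do(D = d')), P(X, Z | do(D = d))}` without the conditional
independence `Y ⫫ D | X, Z`. -/
theorem domain_pivot_necessity_xor_witness
    {Ω : Type*} [MeasurableSpace Ω] (P : Measure Ω) [IsProbabilityMeasure P]
    (d d' : Bool) (hdd' : d ≠ d')
    (E E' : Ω → Bool) (hE : Measurable E) (hE' : Measurable E')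
    (hEunif : P (E ⁻¹' {true}) = 1 / 2) (hE'unif : P (E' ⁻¹' {true}) = 1 / 2)
    (hindep : IndepFun E E' P)
    (Z1 Y1 Z2 Y2 : Bool → Ω → Bool)
    (hZ1 : ∀ (D : Bool) (ω : Ω),
      Z1 D ω = if D = d' then xor D (E ω) else xor D (E' ω))
    (hY1 : ∀ (D : Bool) (ω : Ω), Y1 D ω = xor (Z1 D ω) (E ω))
    (hZ2 : ∀ (D : Bool) (ω : Ω), Z2 D ω = xor D (E ω))
    (hY2 : ∀ (D : Bool) (ω : Ω), Y2 D ω = xor (Z2 D ω) (E ω)) :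
    (P.map (fun ω => (Z1 d' ω, Y1 d' ω)) = P.map (fun ω => (Z2 d' ω, Y2 d' ω))) ∧
    (P.map (Z1 d) = P.map (Z2 d)) ∧
    (∫ ω, (if Y1 d ω then (1 : ℝ) else 0) ∂P = 1 / 2) ∧
    (∀ ω : Ω, Y2 d ω = d) ∧
    ((if d = true then (1 : ℝ) else 0) ≠ 1 / 2) := by
  have hxor : Measurable (xor d) := .of_discrete
  have hZ1d : Z1 d = xor d ∘ E' := funext fun ω => by simp [hZ1, hdd']
  have hZ2d : Z2 d = xor d ∘ E := funext (hZ2 d)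
  have hY1d : Y1 d = fun ω => xor (E ω) ((xor d ∘ E') ω) := by
    funext ω; rw [hY1, hZ1d, Bool.xor_comm]
  have hsource : ∀ ω, (Z1 d' ω, Y1 d' ω) = (Z2 d' ω, Y2 d' ω) := fun ω => by
    simp [hZ1, hY1, hZ2, hY2]
  refine ⟨by simp_rw [hsource], ?_, ?_, fun ω => by simp [hY2, hZ2], by cases d <;> norm_num⟩
  · rw [hZ1d, hZ2d, ← Measure.map_map hxor hE', ← Measure.map_map hxor hE,
      map_eq_map_of_measure_preimage_true_eq_half hE' hE hE'unif hEunif]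
  · rw [hY1d, integral_ite_bool_eq_measureReal (by fun_prop), measureReal_def,
      measure_xor_eq_true_of_indepFun hE (hxor.comp hE') (hindep.comp measurable_id hxor) hEunif]
    norm_num
end
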